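/- If a history H is legal and its conflict graph CG(H) is acyclic, then H is conflict-opaque. -/

import Mathlib

namespace STM

/-- Transactional events: reads (with `none` meaning the read returned abort `A`),
writes, commits and aborts, indexed by transaction ids. -/
inductive Ev (Tid Obj Val : Type) : Type where
  | read  (t : Tid) (x : Obj) (v : Option Val)
  | write (t : Tid) (x : Obj) (v : Val)
  | commit (t : Tid)
  | abort (t : Tid)

/-- A history is a finite sequence of pairwise distinct events. -/
structure History (Tid Obj Val : Type) : Type where
  evs : List (Ev Tid Obj Val)
  nodup : evs.Nodup

variable {Tid Obj Val : Type}

def Ev.tid : Ev Tid Obj Val → Tid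
  | .read t _ _ => t
  | .write t _ _ => t
  | .commit t => t
  | .abort t => t

namespace History

def Mem (H : History Tid Obj Val) (e : Ev Tid Obj Val) : Prop := e ∈ H.evs

/-- `e1 <_H e2` : e1 occurs strictly before e2 in H. -/
def Lt (H : History Tid Obj Val) (e1 e2 : Ev Tid Obj Val) : Prop :=
  ∃ i j : Fin H.evs.length, i < j ∧ H.evs.get i = e1 ∧ H.evs.get j = e2

/-- Two histories are equivalent if they have the same set of events. -/
def Equiv (H1 H2 : History Tid Obj Val) : Prop :=
  ∀ e, H1.Mem e ↔ H2.Mem e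

/-- `x` belongs to the write set of transaction `t` in `H`. -/
def Wset (H : History Tid Obj Val) (t : Tid) (x : Obj) : Prop :=
  ∃ v, H.Mem (Ev.write t x v)

/-- The set of transactions appearing in `H`. -/
def txns (H : History Tid Obj Val) : Set Tid := {t | ∃ e, H.Mem e ∧ e.tid = t}

def committed (H : History Tid Obj Val) (t : Tid) : Prop := H.Mem (Ev.commit t)

def aborted (H : History Tid Obj Val) (t : Tid) : Prop := H.Mem (Ev.abort t)

def incomplete (H : History Tid Obj Val) (t : Tid) : Prop :=
  t ∈ H.txns ∧ ¬ H.committed t ∧ ¬ H.aborted t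

/-- Event-level conflict order of `H`: w-w, w-r and r-w conflicts,
oriented by the order of events in `H`. -/
def COe (H : History Tid Obj Val) (e1 e2 : Ev Tid Obj Val) : Prop :=
  H.Lt e1 e2 ∧
  ((∃ t1 t2 x, t1 ≠ t2 ∧ e1 = Ev.commit t1 ∧ e2 = Ev.commit t2 ∧
      H.Wset t1 x ∧ H.Wset t2 x) ∨
   (∃ t1 t2 x v, t1 ≠ t2 ∧ e1 = Ev.commit t1 ∧ e2 = Ev.read t2 x (some v) ∧
      H.Wset t1 x) ∨
   (∃ t1 t2 x v, t1 ≠ t2 ∧ e1 = Ev.read t1 x (some v) ∧ e2 = Ev.commit t2 ∧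
      H.Wset t2 x))

/-- Transaction-level conflict order `T_{t1} ≺_H^CO T_{t2}`. -/
def CO (H : History Tid Obj Val) (t1 t2 : Tid) : Prop :=
  ∃ e1 e2, e1.tid = t1 ∧ e2.tid = t2 ∧ H.COe e1 e2

/-- Real-time order: `t1` completes before `t2` begins
(every event of `t1` precedes every event of `t2`). -/
def RT (H : History Tid Obj Val) (t1 t2 : Tid) : Prop :=
  t1 ∈ H.txns ∧ t2 ∈ H.txns ∧ t1 ≠ t2 ∧
  ∀ e1 e2, H.Mem e1 → H.Mem e2 → e1.tid = t1 → e2.tid = t2 → H.Lt e1 e2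

/-- A history is t-sequential if every two transactions are related
by the real-time order. -/
def TSequential (H : History Tid Obj Val) : Prop :=
  ∀ t1 t2, t1 ∈ H.txns → t2 ∈ H.txns → t1 ≠ t2 → H.RT t1 t2 ∨ H.RT t2 t1

/-- `H` is valid: every successful read reads a value written by a
transaction that committed before it. -/
def Valid (H : History Tid Obj Val) : Prop :=
  ∀ t x v, H.Mem (Ev.read t x (some v)) →
    ∃ j, H.Lt (Ev.commit j) (Ev.read t x (some v)) ∧ H.Mem (Ev.write j x v)

/-- `H` is legal: for every successful read, the transaction of its last write
(the latest commit preceding the read among transactions writing `x`)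
wrote the value `v` that was read. -/
def Legal (H : History Tid Obj Val) : Prop :=
  ∀ t x v, H.Mem (Ev.read t x (some v)) →
    ∃ i, H.Lt (Ev.commit i) (Ev.read t x (some v)) ∧ H.Wset i x ∧
      (∀ j, H.Lt (Ev.commit j) (Ev.read t x (some v)) → H.Wset j x →
        j = i ∨ H.Lt (Ev.commit j) (Ev.commit i)) ∧
      H.Mem (Ev.write i x v)

/-- `Hc` is the completion `H̄` of `H`: an abort event is inserted
immediately after the last event of every incomplete transaction. -/
def IsCompletion (H Hc : History Tid Obj Val) : Prop :=
  (∀ e, Hc.Mem e ↔ (H.Mem e ∨ ∃ t, H.incomplete t ∧ e = Ev.abort t)) ∧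
  (∀ e1 e2, H.Mem e1 → H.Mem e2 → (H.Lt e1 e2 ↔ Hc.Lt e1 e2)) ∧
  (∀ t, H.incomplete t →
    (∀ e, H.Mem e → e.tid = t → Hc.Lt e (Ev.abort t)) ∧
    (∀ e, H.Mem e → (Hc.Lt (Ev.abort t) e ↔
       ∀ e', H.Mem e' → e'.tid = t → H.Lt e' e)))

/-- Edge of the conflict graph `CG(H)`: real-time or conflict order. -/
def CGedge (H : History Tid Obj Val) (t1 t2 : Tid) : Prop :=
  H.RT t1 t2 ∨ H.CO t1 t2

/-- The conflict graph of `H` is acyclic. -/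
def CGAcyclic (H : History Tid Obj Val) : Prop :=
  ∀ t, ¬ Relation.TransGen H.CGedge t t

/-- `H` is conflict-opaque: `H` is valid and there is a t-sequential legal
history `S` equivalent to some completion `H̄` of `H` respecting
`≺_H^RT` and `≺_H^CO`. -/
def CoOpaque (H : History Tid Obj Val) : Prop :=
  H.Valid ∧ ∃ Hc S : History Tid Obj Val, H.IsCompletion Hc ∧
    S.TSequential ∧ S.Legal ∧ S.Equiv Hc ∧
    (∀ t1 t2, H.RT t1 t2 → S.RT t1 t2) ∧
    (∀ t1 t2, H.CO t1 t2 → S.CO t1 t2)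

/-- `H` is opaque: as conflict-opacity, but `S` need only respect `≺_H^RT`. -/
def Opaque (H : History Tid Obj Val) : Prop :=
  H.Valid ∧ ∃ Hc S : History Tid Obj Val, H.IsCompletion Hc ∧
    S.TSequential ∧ S.Legal ∧ S.Equiv Hc ∧
    (∀ t1 t2, H.RT t1 t2 → S.RT t1 t2)

end History
end STM


/-!
The edges of the acyclic conflict graph extend to a linear order `s` on transactions. Sorting
the events of the completion `H̄` stably by the `s`-rank of their transaction yields a
t-sequential history `S`: events of one transaction keep their relative order, and every
real-time or conflict edge of `H` points forward in `S`. Legality carries over from `H` to `S`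
because legality only compares events that are ordered alike in both histories: a read against
the commits of the writers of its object, two such commits, and two events of one transaction.
-/

namespace List

variable {α β : Type*}

theorem pair_sublist_iff_exists_get {l : List α} {a b : α} :
    [a, b] <+ l ↔ ∃ i j : Fin l.length, i < j ∧ l.get i = a ∧ l.get j = b := by
  rw [sublist_iff_exists_fin_orderEmbedding_get_eq]
  constructor
  · rintro ⟨f, hf⟩
    exact ⟨f 0, f 1, f.strictMono (show (0 : Fin 2) < 1 by decide), (hf 0).symm, (hf 1).symm⟩
  · rintro ⟨i, j, hij, rfl, rfl⟩
    refine ⟨OrderEmbedding.ofStrictMono ![i, j] fun x y hxy => ?_, fun x => ?_⟩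
    · fin_cases x <;> fin_cases y <;> simp_all
    · fin_cases x <;> rfl

theorem pair_sublist_flatMap {l : List α} {f : α → List β} {a b : α} {x y : β}
    (h : [a, b] <+ l) (hx : x ∈ f a) (hy : y ∈ f b) : [x, y] <+ l.flatMap f := by
  refine Sublist.trans ?_ (h.flatMap f)
  simpa using (singleton_sublist.mpr hx).append (singleton_sublist.mpr hy)

end List

theorem Relation.exists_isLinearOrder_le_of_acyclic {α : Type*} {R : α → α → Prop}
    (h : ∀ a, ¬ TransGen R a a) : ∃ s : α → α → Prop, IsLinearOrder α s ∧ R ≤ s := by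
  have : IsPartialOrder α (ReflTransGen R) :=
    { antisymm := fun a b hab hba => by
        rcases reflTransGen_iff_eq_or_transGen.mp hab with rfl | hab
        · rfl
        · exact absurd (hab.trans_left hba) (h a) }
  obtain ⟨s, hs, hle⟩ := extend_partialOrder (ReflTransGen R)
  exact ⟨s, hs, fun a b hab => hle a b (.single hab)⟩

namespace STM

namespace History

open List

variable {Tid Obj Val : Type} {H K K' : History Tid Obj Val} {a b c : Ev Tid Obj Val}
  {t t₁ t₂ : Tid}

theorem lt_iff_sublist : K.Lt a b ↔ [a, b] <+ K.evs :=
  List.pair_sublist_iff_exists_get.symm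

theorem Lt.mem_left (h : K.Lt a b) : K.Mem a :=
  (lt_iff_sublist.mp h).subset (by simp)

theorem Lt.mem_right (h : K.Lt a b) : K.Mem b :=
  (lt_iff_sublist.mp h).subset (by simp)

theorem Lt.trans (hab : K.Lt a b) (hbc : K.Lt b c) : K.Lt a c := by
  obtain ⟨i, j, hij, ha, hb⟩ := hab
  obtain ⟨j', k, hjk, hb', hc⟩ := hbc
  obtain rfl : j = j' := K.nodup.get_inj_iff.mp (hb.trans hb'.symm)
  exact ⟨i, k, hij.trans hjk, ha, hc⟩

theorem Lt.asymm (hab : K.Lt a b) : ¬ K.Lt b a := by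
  rintro ⟨j, i, hji, hb, ha⟩
  obtain ⟨i', j', hij, ha', hb'⟩ := hab
  obtain rfl : i = i' := K.nodup.get_inj_iff.mp (ha.trans ha'.symm)
  obtain rfl : j = j' := K.nodup.get_inj_iff.mp (hb.trans hb'.symm)
  exact lt_asymm hij hji

theorem Lt.irrefl : ¬ K.Lt a a := fun h => h.asymm h

theorem lt_or_lt_of_ne (hab : a ≠ b) (ha : K.Mem a) (hb : K.Mem b) : K.Lt a b ∨ K.Lt b a := by
  obtain ⟨i, rfl⟩ := List.mem_iff_get.mp ha
  obtain ⟨j, rfl⟩ := List.mem_iff_get.mp hb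
  rcases lt_trichotomy i j with h | rfl | h
  · exact .inl ⟨i, j, h, rfl, rfl⟩
  · exact absurd rfl hab
  · exact .inr ⟨j, i, h, rfl, rfl⟩

theorem lt_of_lt_of_swap (h : K'.Lt a b) (ha : K.Mem a) (hb : K.Mem b)
    (hswap : K.Lt b a → K'.Lt b a) : K.Lt a b :=
  (lt_or_lt_of_ne (by rintro rfl; exact h.irrefl) ha hb).resolve_right fun hba =>
    h.asymm (hswap hba)

theorem txns_mono (h : ∀ e, K.Mem e → K'.Mem e) : K.txns ⊆ K'.txns :=
  fun _ ⟨e, he, ht⟩ => ⟨e, h e he, ht⟩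

theorem CGedge.mem_txns (h : K.CGedge t₁ t₂) : t₁ ∈ K.txns ∧ t₂ ∈ K.txns := by
  rcases h with h | ⟨e₁, e₂, rfl, rfl, h⟩
  · exact ⟨h.1, h.2.1⟩
  · exact ⟨⟨e₁, h.1.mem_left, rfl⟩, ⟨e₂, h.1.mem_right, rfl⟩⟩

theorem COe.of_wset (h : K.COe a b) (hW : ∀ t x, K.Wset t x → K'.Wset t x)
    (hlt : K'.Lt a b) : K'.COe a b := by
  refine ⟨hlt, ?_⟩
  rcases h.2 with ⟨t₁, t₂, x, hne, h₁, h₂, hw₁, hw₂⟩ | ⟨t₁, t₂, x, v, hne, h₁, h₂, hw⟩ |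
    ⟨t₁, t₂, x, v, hne, h₁, h₂, hw⟩
  · exact .inl ⟨t₁, t₂, x, hne, h₁, h₂, hW _ _ hw₁, hW _ _ hw₂⟩
  · exact .inr (.inl ⟨t₁, t₂, x, v, hne, h₁, h₂, hW _ _ hw⟩)
  · exact .inr (.inr ⟨t₁, t₂, x, v, hne, h₁, h₂, hW _ _ hw⟩)

theorem Legal.valid (h : K.Legal) : K.Valid := fun t x v hr =>
  let ⟨i, hlt, _, _, hw⟩ := h t x v hr
  ⟨i, hlt, hw⟩

theorem Legal.of_conflict_order (hK : K.Legal)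
    (hmem : ∀ e, (∀ t, e ≠ .abort t) → (K'.Mem e ↔ K.Mem e))
    (hco : ∀ a b, K.COe a b → K'.Lt a b)
    (htid : ∀ a b, a.tid = b.tid → K.Lt a b → K'.Lt a b) : K'.Legal := by
  have hwset : ∀ t x, K'.Wset t x ↔ K.Wset t x := fun t x =>
    exists_congr fun _ => hmem _ (by simp)
  intro t x v hr'
  have hr := (hmem _ (by simp)).mp hr'
  obtain ⟨i, hi, hiW, hmax, hiw⟩ := hK t x v hr
  have hread : ∀ j, K.Wset j x →
      (K'.Lt (.commit j) (.read t x (some v)) ↔ K.Lt (.commit j) (.read t x (some v))) := by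
    intro j hj
    have hreflect := fun (h : K'.Lt (.commit j) (.read t x (some v))) =>
      lt_of_lt_of_swap h ((hmem _ (by simp)).mp h.mem_left) hr
    by_cases hjt : j = t
    · subst hjt
      exact ⟨fun h => hreflect h (htid _ _ rfl), htid _ _ rfl⟩
    · exact ⟨fun h => hreflect h fun h' =>
          hco _ _ ⟨h', .inr (.inr ⟨t, j, x, v, Ne.symm hjt, rfl, rfl, hj⟩)⟩,
        fun h => hco _ _ ⟨h, .inr (.inl ⟨j, t, x, v, hjt, rfl, rfl, hj⟩)⟩⟩
  refine ⟨i, (hread i hiW).mpr hi, (hwset i x).mpr hiW, fun j hj hjW => ?_,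
    (hmem _ (by simp)).mpr hiw⟩
  rw [hwset] at hjW
  by_cases hji : j = i
  · exact .inl hji
  · exact .inr (hco _ _ ⟨(hmax j ((hread j hjW).mp hj) hjW).resolve_left hji,
      .inl ⟨j, i, x, hji, rfl, rfl, hjW, hiW⟩⟩)

def IsLastOfTxn (H : History Tid Obj Val) (e : Ev Tid Obj Val) : Prop :=
  ∀ e', H.Mem e' → e'.tid = e.tid → e' = e ∨ H.Lt e' e

theorem IsLastOfTxn.eq (ha : H.IsLastOfTxn a) (hb : H.IsLastOfTxn b) (ha' : H.Mem a)
    (hb' : H.Mem b) (h : a.tid = b.tid) : a = b := by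
  rcases hb a ha' h with rfl | hab
  · rfl
  rcases ha b hb' h.symm with rfl | hba
  · rfl
  exact absurd hba hab.asymm

theorem exists_isLastOfTxn (ht : t ∈ H.txns) : ∃ e, H.Mem e ∧ e.tid = t ∧ H.IsLastOfTxn e := by
  classical
  obtain ⟨e₀, he₀, rfl⟩ := ht
  obtain ⟨i₀, rfl⟩ := List.mem_iff_get.mp he₀
  obtain ⟨i, hi, hmax⟩ := Finset.exists_max_image
    (Finset.univ.filter fun i => (H.evs.get i).tid = (H.evs.get i₀).tid) id ⟨i₀, by simp⟩
  rw [Finset.mem_filter] at hi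
  refine ⟨H.evs.get i, List.get_mem _ _, hi.2, fun e he heq => ?_⟩
  obtain ⟨j, rfl⟩ := List.mem_iff_get.mp he
  rcases (hmax j (Finset.mem_filter.mpr ⟨Finset.mem_univ _, heq.trans hi.2⟩)).lt_or_eq with hj | rfl
  · exact .inr ⟨j, i, hj, rfl, rfl⟩
  · exact .inl rfl

open Classical in
noncomputable def completionBlock (H : History Tid Obj Val) (e : Ev Tid Obj Val) :
    List (Ev Tid Obj Val) :=
  if H.incomplete e.tid ∧ H.IsLastOfTxn e then [e, .abort e.tid] else [e]

theorem mem_completionBlock {e : Ev Tid Obj Val} :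
    a ∈ H.completionBlock e ↔
      a = e ∨ (H.incomplete e.tid ∧ H.IsLastOfTxn e ∧ a = .abort e.tid) := by
  unfold completionBlock
  split_ifs with h <;>
    simp only [List.mem_cons, List.not_mem_nil, or_false] <;> tauto

theorem nodup_flatMap_completionBlock : (H.evs.flatMap H.completionBlock).Nodup := by
  refine List.nodup_flatMap.mpr ⟨fun e he => ?_, H.nodup.imp_of_mem fun {e₁ e₂} he₁ he₂ hne => ?_⟩
  · unfold completionBlock
    split_ifs with h
    · simpa using fun heq : e = .abort e.tid => h.1.2.2 (heq ▸ he)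
    · simp
  · intro x hx₁ hx₂
    rw [mem_completionBlock] at hx₁ hx₂
    rcases hx₁ with rfl | ⟨hinc₁, hlast₁, rfl⟩ <;> rcases hx₂ with heq | ⟨hinc₂, hlast₂, heq⟩
    · exact hne heq
    · exact hinc₂.2.2 (show H.Mem _ from heq ▸ he₁)
    · exact hinc₁.2.2 (show H.Mem _ from heq ▸ he₂)
    · exact hne (hlast₁.eq hlast₂ he₁ he₂ (Ev.abort.inj heq))

noncomputable def completion (H : History Tid Obj Val) : History Tid Obj Val :=
  ⟨H.evs.flatMap H.completionBlock, nodup_flatMap_completionBlock⟩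

theorem mem_completion : H.completion.Mem a ↔ H.Mem a ∨ ∃ t, H.incomplete t ∧ a = .abort t := by
  simp only [completion, Mem, List.mem_flatMap, mem_completionBlock]
  constructor
  · rintro ⟨e, he, rfl | ⟨hinc, -, rfl⟩⟩
    · exact .inl he
    · exact .inr ⟨e.tid, hinc, rfl⟩
  · rintro (ha | ⟨t, hinc, rfl⟩)
    · exact ⟨a, ha, .inl rfl⟩
    · obtain ⟨e, he, rfl, hlast⟩ := exists_isLastOfTxn hinc.1
      exact ⟨e, he, .inr ⟨hinc, hlast, rfl⟩⟩

theorem mem_completion_of_mem (h : H.Mem a) : H.completion.Mem a :=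
  mem_completion.mpr (.inl h)

theorem Lt.completion (h : H.Lt a b) : H.completion.Lt a b :=
  lt_iff_sublist.mpr <| List.pair_sublist_flatMap (lt_iff_sublist.mp h)
    (mem_completionBlock.mpr (.inl rfl)) (mem_completionBlock.mpr (.inl rfl))

theorem isCompletion_completion : H.IsCompletion H.completion := by
  refine ⟨fun _ => mem_completion,
    fun a b ha hb => ⟨Lt.completion, fun h => lt_of_lt_of_swap h ha hb Lt.completion⟩,
    fun t hinc => ?_⟩
  obtain ⟨el, hel, rfl, hlast⟩ := exists_isLastOfTxn hinc.1
  have habort_mem : .abort el.tid ∈ H.completionBlock el :=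
    mem_completionBlock.mpr (.inr ⟨hinc, hlast, rfl⟩)
  have habort : H.completion.Lt el (.abort el.tid) := by
    refine lt_iff_sublist.mpr (Sublist.trans ?_ ((List.singleton_sublist.mpr hel).flatMap _))
    simp [completionBlock, hinc, hlast]
  have hbefore : ∀ e, H.Mem e → e.tid = el.tid → H.completion.Lt e (.abort el.tid) :=
    fun e he ht => (hlast e he ht).elim (fun h => h ▸ habort) fun h => h.completion.trans habort
  refine ⟨hbefore, fun e he => ⟨fun h e' he' ht => ?_, fun h => ?_⟩⟩
  · exact lt_of_lt_of_swap ((hbefore e' he' ht).trans h) he' he Lt.completion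
  · exact lt_iff_sublist.mpr <| List.pair_sublist_flatMap (lt_iff_sublist.mp (h el hel rfl))
      habort_mem (mem_completionBlock.mpr (.inl rfl))

section Sorting

variable {r : Tid → Tid → Prop} [DecidableRel r]

variable (r) in
def sortByTid (K : History Tid Obj Val) : History Tid Obj Val :=
  ⟨K.evs.insertionSort (fun a b => r a.tid b.tid),
    (List.perm_insertionSort _ _).nodup_iff.mpr K.nodup⟩

theorem mem_sortByTid : (K.sortByTid r).Mem a ↔ K.Mem a :=
  (List.perm_insertionSort _ _).mem_iff

theorem txns_sortByTid : (K.sortByTid r).txns = K.txns :=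
  Set.ext fun _ => exists_congr fun _ => and_congr_left' mem_sortByTid

theorem Lt.sortByTid (h : K.Lt a b) (hr : r a.tid b.tid) : (K.sortByTid r).Lt a b :=
  lt_iff_sublist.mpr (List.pair_sublist_insertionSort hr (lt_iff_sublist.mp h))

theorem lt_sortByTid [IsLinearOrder Tid r] (ha : K.Mem a) (hb : K.Mem b) (hne : a.tid ≠ b.tid)
    (hr : r a.tid b.tid) : (K.sortByTid r).Lt a b := by
  have : Std.Total fun a b : Ev Tid Obj Val => r a.tid b.tid := ⟨fun a b => total_of r a.tid b.tid⟩
  have : IsTrans (Ev Tid Obj Val) fun a b => r a.tid b.tid := ⟨fun _ _ _ => trans_of r⟩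
  refine (lt_or_lt_of_ne (by rintro rfl; exact hne rfl) (mem_sortByTid.mpr ha)
    (mem_sortByTid.mpr hb)).resolve_right fun hba => hne (antisymm hr ?_)
  exact (List.pairwise_pair (R := fun a b : Ev Tid Obj Val => r a.tid b.tid)).mp
    ((List.pairwise_insertionSort (fun a b : Ev Tid Obj Val => r a.tid b.tid) _).sublist
      (lt_iff_sublist.mp hba))

theorem rt_sortByTid [IsLinearOrder Tid r] (h₁ : t₁ ∈ K.txns) (h₂ : t₂ ∈ K.txns) (hne : t₁ ≠ t₂)
    (hr : r t₁ t₂) : (K.sortByTid r).RT t₁ t₂ := by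
  refine ⟨by rwa [txns_sortByTid], by rwa [txns_sortByTid], hne, ?_⟩
  rintro a b ha hb rfl rfl
  exact lt_sortByTid (mem_sortByTid.mp ha) (mem_sortByTid.mp hb) hne hr

theorem tSequential_sortByTid [IsLinearOrder Tid r] : (K.sortByTid r).TSequential := by
  intro t₁ t₂ h₁ h₂ hne
  rw [txns_sortByTid] at h₁ h₂
  exact (total_of r t₁ t₂).imp (rt_sortByTid h₁ h₂ hne) (rt_sortByTid h₂ h₁ hne.symm)

end Sorting

end History

end STM

open STM History in
/-- If a history is legal and its conflict graph is acyclic,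
then it is conflict-opaque. -/
theorem coOpaque_of_legal_of_cgAcyclic {Tid Obj Val : Type}
    (H : STM.History Tid Obj Val)
    (hleg : H.Legal) (hacy : H.CGAcyclic) :
    H.CoOpaque := by
  classical
  obtain ⟨s, hs, hCGs⟩ := Relation.exists_isLinearOrder_le_of_acyclic hacy
  let S := H.completion.sortByTid s
  have hsub : ∀ e, H.Mem e → S.Mem e := fun _ he => mem_sortByTid.mpr (mem_completion_of_mem he)
  have htxns : H.txns ⊆ H.completion.txns := txns_mono fun _ => mem_completion_of_mem
  have hedge : ∀ t₁ t₂, H.CGedge t₁ t₂ → S.RT t₁ t₂ := fun t₁ t₂ h =>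
    rt_sortByTid (htxns h.mem_txns.1) (htxns h.mem_txns.2)
      (by rintro rfl; exact hacy t₁ (.single h)) (hCGs t₁ t₂ h)
  have hco : ∀ a b, H.COe a b → S.Lt a b := fun a b h =>
    (hedge _ _ (.inr ⟨a, b, rfl, rfl, h⟩)).2.2.2 a b (hsub a h.1.mem_left) (hsub b h.1.mem_right)
      rfl rfl
  have hmem : ∀ e, (∀ t, e ≠ .abort t) → (S.Mem e ↔ H.Mem e) := fun e he => by
    simp [S, mem_sortByTid, mem_completion, he]
  refine ⟨hleg.valid, H.completion, S, isCompletion_completion, tSequential_sortByTid,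
    hleg.of_conflict_order hmem hco fun a b hab h => h.completion.sortByTid (hab ▸ refl_of s _),
    fun _ => mem_sortByTid, fun t₁ t₂ h => hedge t₁ t₂ (.inl h), ?_⟩
  rintro t₁ t₂ ⟨a, b, rfl, rfl, h⟩
  exact ⟨a, b, rfl, rfl, h.of_wset (fun t x ⟨v, hv⟩ => ⟨v, hsub _ hv⟩) (hco a b h)⟩
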